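/- arXiv:1603.05550 — 4 statements merged into one kernel-verified Lean document; each statement's English description precedes it below -/
import Mathlib

section
/- Let n, d be natural numbers, let λ : Fin n → Fin d → ℂ, and for each j : Fin d let D j denote the diagonal matrix Matrix.diagonal (fun a => λ a j) of size n × n over ℂ. Then for every w : Fin d → ℂ, the following are equivalent: (i) there exists a : Fin n with λ a = w; (ii) for all ξ₀ : ℂ and ξ : Fin d → ℂ satisfying ξ₀ + ∑ j, w j * ξ j = 0, one has det(ξ₀ • (1 : Matrix (Fin n) (Fin n) ℂ) + ∑ j, ξ j • D j) = 0. -/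
open Polynomial in
theorem spectral_cover_projective_duality
    (n d : ℕ) (lam : Fin n → Fin d → ℂ)
    (D : Fin d → Matrix (Fin n) (Fin n) ℂ)
    (hD : ∀ j, D j = Matrix.diagonal (fun a => lam a j))
    (w : Fin d → ℂ) :
    (∃ a : Fin n, lam a = w) ↔
      (∀ (ξ₀ : ℂ) (ξ : Fin d → ℂ), ξ₀ + ∑ j, w j * ξ j = 0 →
        (ξ₀ • (1 : Matrix (Fin n) (Fin n) ℂ) + ∑ j, ξ j • D j).det = 0) := by
  have key : ∀ (ξ₀ : ℂ) (ξ : Fin d → ℂ),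
      ξ₀ • (1 : Matrix (Fin n) (Fin n) ℂ) + ∑ j, ξ j • D j
        = Matrix.diagonal (fun a => ξ₀ + ∑ j, ξ j * lam a j) := by
    intro ξ₀ ξ
    ext a b
    by_cases h : a = b
    · subst h
      simp [hD, Matrix.sum_apply, Matrix.one_apply]
    · simp [hD, Matrix.sum_apply, Matrix.one_apply, Matrix.diagonal_apply_ne _ h, h]
  constructor
  · rintro ⟨a, ha⟩ ξ₀ ξ hξ
    rw [key, Matrix.det_diagonal]
    apply Finset.prod_eq_zero (Finset.mem_univ a)
    rw [ha, ← hξ]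
    congr 1
    exact Finset.sum_congr rfl fun j _ => mul_comm _ _
  · intro h
    by_contra hno
    push_neg at hno
    -- For each a, the polynomial ∑ j, C (lam a j - w j) * X^j is nonzero
    set p : Fin n → ℂ[X] := fun a => ∑ j : Fin d, C (lam a j - w j) * X ^ (j : ℕ) with hp
    have hpne : ∀ a, p a ≠ 0 := by
      intro a hzero
      apply hno a
      funext j
      have := congrArg (fun q => Polynomial.coeff q (j : ℕ)) hzero
      simp only [hp, Polynomial.finset_sum_coeff, Polynomial.coeff_C_mul,
        Polynomial.coeff_X_pow, Polynomial.coeff_zero] at this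
      rw [Finset.sum_eq_single j] at this
      · simpa [sub_eq_zero] using this
      · intro b _ hb
        simp [Fin.val_eq_val, Ne.symm hb]
      · simp
    obtain ⟨t, ht⟩ := Infinite.exists_notMem_finset
      (Finset.univ.biUnion fun a : Fin n => (p a).roots.toFinset)
    set ξ : Fin d → ℂ := fun j => t ^ (j : ℕ) with hxi
    have hcon : (-∑ j, w j * ξ j) + ∑ j, w j * ξ j = 0 := by ring
    have hdet := h _ ξ hcon
    rw [key, Matrix.det_diagonal] at hdet
    obtain ⟨a, -, ha⟩ := Finset.prod_eq_zero_iff.mp hdet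
    apply ht
    apply Finset.mem_biUnion.mpr ⟨a, Finset.mem_univ a, ?_⟩
    rw [Multiset.mem_toFinset, Polynomial.mem_roots (hpne a)]
    have : (p a).eval t = 0 := by
      simp only [hp, Polynomial.eval_finset_sum, Polynomial.eval_mul, Polynomial.eval_C,
        Polynomial.eval_pow, Polynomial.eval_X]
      have : ∑ j : Fin d, (lam a j - w j) * t ^ (j : ℕ)
          = (-∑ j, w j * ξ j) + ∑ j, ξ j * lam a j := by
        rw [neg_add_eq_sub, ← Finset.sum_sub_distrib]
        exact Finset.sum_congr rfl fun j _ => by simp [hxi]; ring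
      rw [this, ha]
    exact this
end

section
/- Let n, d be natural numbers, let λ : Fin n → Fin d → ℂ, and for each j : Fin d let D j denote the diagonal matrix Matrix.diagonal (fun a => λ a j) of size n × n over ℂ. Then the set {w : Fin d → ℂ | ∀ v : Fin d → ℂ, det((∑ j, v j • D j) − (∑ j, v j * w j) • (1 : Matrix (Fin n) (Fin n) ℂ)) = 0} equals the range of λ, i.e. the set {w | ∃ a : Fin n, w = λ a}. -/
open MvPolynomial in
theorem simpson_spectral_cover_fiber_eq_range
    (n d : ℕ) (lam : Fin n → Fin d → ℂ)
    (D : Fin d → Matrix (Fin n) (Fin n) ℂ)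
    (hD : ∀ j, D j = Matrix.diagonal (fun a => lam a j)) :
    {w : Fin d → ℂ | ∀ v : Fin d → ℂ,
        ((∑ j, v j • D j) - (∑ j, v j * w j) • (1 : Matrix (Fin n) (Fin n) ℂ)).det = 0}
      = {w : Fin d → ℂ | ∃ a : Fin n, w = lam a} := by
  have key : ∀ (w v : Fin d → ℂ),
      ((∑ j, v j • D j) - (∑ j, v j * w j) • (1 : Matrix (Fin n) (Fin n) ℂ)).det
        = ∏ a, ∑ j, (lam a j - w j) * v j := by
    intro w v
    have h1 : (∑ j, v j • D j) = Matrix.diagonal (fun a => ∑ j, v j * lam a j) := by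
      ext a b
      by_cases hab : a = b <;>
        simp [hD, Matrix.sum_apply, Matrix.diagonal_apply, hab]
    have h2 : (∑ j, v j * w j) • (1 : Matrix (Fin n) (Fin n) ℂ)
        = Matrix.diagonal (fun _ => ∑ j, v j * w j) := by
      ext a b
      by_cases hab : a = b <;>
        simp [Matrix.diagonal_apply, Matrix.one_apply, hab]
    rw [h1, h2, Matrix.diagonal_sub, Matrix.det_diagonal]
    congr 1; funext a
    rw [← Finset.sum_sub_distrib]
    congr 1; funext j; ring
  ext w
  simp only [Set.mem_setOf_eq]
  constructor
  · intro h
    have hP : (∏ a, ∑ j, (C (lam a j - w j) * X j : MvPolynomial (Fin d) ℂ)) = 0 := by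
      apply MvPolynomial.funext
      intro v
      simp only [map_prod, map_sum, eval_mul, eval_C, eval_X, map_zero]
      rw [← key w v]; exact h v
    obtain ⟨a, -, ha⟩ := Finset.prod_eq_zero_iff.mp hP
    refine ⟨a, funext fun j => ?_⟩
    have := congrArg (MvPolynomial.eval (Pi.single j (1:ℂ))) ha
    simp only [map_sum, eval_mul, eval_C, eval_X, map_zero] at this
    have : lam a j - w j = 0 := by
      rw [Finset.sum_eq_single j] at this
      · simpa using this
      · intro b _ hb; simp [Pi.single_apply, hb]
      · simp
    exact (sub_eq_zero.mp this).symm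
  · rintro ⟨a, rfl⟩ v
    rw [key]
    exact Finset.prod_eq_zero (Finset.mem_univ a) (by simp)
end

section
/- Let n, d be natural numbers and let A : Fin d → Matrix (Fin n) (Fin n) ℂ be a family of pairwise commuting matrices (∀ i j, Commute (A i) (A j)). Then there exists λ : Fin n → Fin d → ℂ such that for every v : Fin d → ℂ, det(∑ j, v j • A j) = ∏ a, (∑ j, v j * λ a j). -/
/-!
The joint generalized eigenspaces `V χ = ⋂ᵢ ker (Aᵢ - χᵢ)^∞` of the commuting family are invariant
under every `Aⱼ` and decompose `ℂⁿ` as a direct sum. On `V χ` the operator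
`∑ⱼ vⱼ Aⱼ - (∑ⱼ vⱼ χⱼ)` is a linear combination of the commuting nilpotents `Aⱼ - χⱼ`, hence
nilpotent, so `det (∑ⱼ vⱼ Aⱼ) = ∏_χ (∑ⱼ vⱼ χⱼ) ^ dim V χ`. Listing every `χ` with multiplicity
`dim V χ` gives the `n` tuples `λ a`.
-/

open Module Set

theorem Matrix.det_blockDiagonal' {ι R : Type*} [CommRing R] [Fintype ι] [DecidableEq ι]
    {κ : ι → Type*} [∀ i, Fintype (κ i)] [∀ i, DecidableEq (κ i)]
    (M : ∀ i, Matrix (κ i) (κ i) R) :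
    (blockDiagonal' M).det = ∏ i, (M i).det := by
  let : LinearOrder ι := LinearOrder.lift' _ (Fintype.equivFin ι).injective
  rw [(blockTriangular_blockDiagonal' M).det_fintype]
  refine Finset.prod_congr rfl fun i _ ↦ ?_
  let e : κ i ≃ {p : Σ j, κ j // p.1 = i} :=
    ⟨fun k ↦ ⟨⟨i, k⟩, rfl⟩, fun p ↦ cast (congrArg κ p.2) p.1.2,
      fun _ ↦ rfl, fun ⟨⟨_, _⟩, h⟩ ↦ by subst h; rfl⟩
  rw [← det_submatrix_equiv_self e]
  congr 1
  ext k l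
  simp [toSquareBlock_def, e, blockDiagonal'_apply_eq]

namespace LinearMap

variable {ι R M : Type*} [CommRing R] [AddCommGroup M] [Module R M]

theorem det_eq_prod_det_restrict [Fintype ι] [DecidableEq ι] {N : ι → Submodule R M}
    [∀ i, Module.Finite R (N i)] [∀ i, Module.Free R (N i)] (h : DirectSum.IsInternal N)
    {f : M →ₗ[R] M} (hf : ∀ i, MapsTo f (N i) (N i)) :
    f.det = ∏ i, (f.restrict (hf i)).det := by
  let b : (i : ι) → Basis _ R (N i) := fun i ↦ Module.Free.chooseBasis R (N i)
  simp_rw [← det_toMatrix (h.collectedBasis b),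
    toMatrix_directSum_collectedBasis_eq_blockDiagonal' h h b b hf, Matrix.det_blockDiagonal',
    det_toMatrix]

theorem det_eq_pow_finrank_of_isNilpotent_sub_smul {K V : Type*} [Field K] [AddCommGroup V]
    [Module K V] [FiniteDimensional K V] {f : V →ₗ[K] V} {c : K}
    (hf : IsNilpotent (f - c • 1)) : f.det = c ^ finrank K V := by
  have h := congrArg (Polynomial.eval (-c)) (f.charpoly_sub_smul c)
  rw [hf.charpoly_eq_X_pow_finrank, Polynomial.eval_comp] at h
  simp only [Polynomial.eval_pow, Polynomial.eval_X, Polynomial.eval_add, Polynomial.eval_C,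
    neg_add_cancel] at h
  rw [det_eq_sign_charpoly_coeff, Polynomial.coeff_zero_eq_eval_zero, ← h, ← mul_pow]
  simp

end LinearMap

theorem DirectSum.IsInternal.finrank_eq_sum {ι K M : Type*} [Fintype ι] [DecidableEq ι]
    [DivisionRing K] [AddCommGroup M] [Module K M] [FiniteDimensional K M]
    {N : ι → Submodule K M} (h : IsInternal N) :
    finrank K M = ∑ i, finrank K (N i) := by
  simp [finrank_eq_card_basis (h.collectedBasis fun i ↦ finBasis K (N i))]

theorem Fintype.exists_prod_comp_eq_prod_pow {α κ : Type*} [Fintype α] [Fintype κ] (m : α → ℕ)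
    (hm : ∑ x, m x = card κ) :
    ∃ lam : κ → α, ∀ {R : Type*} [CommMonoid R] (F : α → R), ∏ a, F (lam a) = ∏ x, F x ^ m x := by
  let e : κ ≃ Σ x, Fin (m x) := equivOfCardEq (by simp [hm])
  refine ⟨fun a ↦ (e a).1, fun F ↦ ?_⟩
  rw [e.prod_comp (fun p ↦ F p.1), ← Finset.univ_sigma_univ, Finset.prod_sigma]
  simp

namespace Module.End

variable {ι R K M : Type*} [CommRing R] [Field K] [AddCommGroup M] [Module R M] [Module K M]

abbrev jointMaxGenEigenspace (f : ι → End R M) (χ : ι → R) : Submodule R M :=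
  ⨅ i, (f i).maxGenEigenspace (χ i)

theorem mapsTo_jointMaxGenEigenspace_of_forall_commute {f : ι → End R M} {g : End R M}
    (hg : ∀ i, Commute (f i) g) (χ : ι → R) :
    MapsTo g (jointMaxGenEigenspace f χ) (jointMaxGenEigenspace f χ) := by
  intro x hx
  simp only [SetLike.mem_coe, Submodule.mem_iInf] at hx ⊢
  exact fun i ↦ mapsTo_maxGenEigenspace_of_comm (hg i) (χ i) (hx i)

variable [FiniteDimensional K M] [Fintype ι] {f : ι → End K M}

theorem det_restrict_sum_smul_jointMaxGenEigenspace (hf : ∀ i j, Commute (f i) (f j))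
    (χ v : ι → K) (h : MapsTo (∑ i, v i • f i : End K M) (jointMaxGenEigenspace f χ)
      (jointMaxGenEigenspace f χ)) :
    ((∑ i, v i • f i).restrict h).det =
      (∑ i, v i * χ i) ^ finrank K (jointMaxGenEigenspace f χ) := by
  have hcomm i j : Commute (f i - χ i • 1) (f j - χ j • 1) :=
    ((hf i j).sub_right ((Commute.one_right _).smul_right _)).sub_left
      ((Commute.one_left _).smul_left _)
  have hmaps i := mapsTo_jointMaxGenEigenspace_of_forall_commute
    (fun j ↦ (hf j i).sub_right ((Commute.one_right _).smul_right (χ i))) χ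
  have hshift : (∑ i, v i • f i).restrict h - (∑ i, v i * χ i) • 1 =
      ∑ i, v i • (f i - χ i • 1).restrict (hmaps i) := by
    ext x
    change (∑ i, v i • f i) x - (∑ i, v i * χ i) • (x : M) =
      ((∑ i, v i • (f i - χ i • 1).restrict (hmaps i)) x : M)
    simp only [LinearMap.coe_sum, LinearMap.coe_smul, Finset.sum_apply, Pi.smul_apply,
      Finset.sum_smul, mul_smul, AddSubmonoidClass.coe_finsetSum, SetLike.val_smul]
    rw [← Finset.sum_sub_distrib]
    exact Finset.sum_congr rfl fun i _ ↦ (smul_sub _ _ _).symm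
  apply LinearMap.det_eq_pow_finrank_of_isNilpotent_sub_smul
  rw [hshift]
  have hnil i : IsNilpotent ((f i - χ i • 1).restrict (hmaps i)) :=
    isNilpotent_restrict_of_le (iInf_le _ i) (isNilpotent_restrict_genEigenspace_top _ _)
  exact Commute.isNilpotent_sum (fun i _ ↦ (hnil i).smul _) fun i j _ _ ↦
    ((LinearMap.restrict_commute (hcomm i j) _ _).smul_left _).smul_right _

theorem exists_det_sum_smul_eq_prod {κ : Type*} [Fintype κ] (hf : ∀ i j, Commute (f i) (f j))
    (htri : ∀ i, ⨆ μ, (f i).maxGenEigenspace μ = ⊤) (hκ : Fintype.card κ = finrank K M) :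
    ∃ lam : κ → ι → K, ∀ v : ι → K, (∑ i, v i • f i).det = ∏ a, ∑ i, v i * lam a i := by
  classical
  let N := jointMaxGenEigenspace f
  have hmaps i j μ := mapsTo_maxGenEigenspace_of_comm (hf j i) μ
  have hindep : iSupIndep N := independent_iInf_maxGenEigenspace_of_forall_mapsTo f hmaps
  have hint : DirectSum.IsInternal fun χ : {χ // N χ ≠ ⊥} ↦ N χ :=
    DirectSum.isInternal_ne_bot_iff.mpr <|
      DirectSum.isInternal_submodule_of_iSupIndep_of_iSup_eq_top hindep
        (iSup_iInf_maxGenEigenspace_eq_top_of_forall_mapsTo f hmaps htri)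
  have : Fintype {χ // N χ ≠ ⊥} := (Submodule.finite_ne_bot_of_iSupIndep hindep).fintype
  obtain ⟨lam, hlam⟩ := Fintype.exists_prod_comp_eq_prod_pow
    (fun χ : {χ // N χ ≠ ⊥} ↦ finrank K (N χ)) (by rw [← hint.finrank_eq_sum, hκ])
  refine ⟨fun a ↦ (lam a).1, fun v ↦ ?_⟩
  have hg := mapsTo_jointMaxGenEigenspace_of_forall_commute (g := ∑ i, v i • f i)
    fun j ↦ Commute.sum_right _ _ _ fun i _ ↦ (hf j i).smul_right _
  rw [LinearMap.det_eq_prod_det_restrict hint fun χ ↦ hg χ.1, hlam fun χ ↦ ∑ i, v i * χ.1 i]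
  exact Finset.prod_congr rfl fun χ _ ↦ det_restrict_sum_smul_jointMaxGenEigenspace hf χ.1 v _

end Module.End

theorem det_linear_combination_commuting_factors
    (n d : ℕ) (A : Fin d → Matrix (Fin n) (Fin n) ℂ)
    (hcomm : ∀ i j, Commute (A i) (A j)) :
    ∃ lam : Fin n → Fin d → ℂ, ∀ v : Fin d → ℂ,
      (∑ j, v j • A j).det = ∏ a, (∑ j, v j * lam a j) := by
  obtain ⟨lam, hlam⟩ := Module.End.exists_det_sum_smul_eq_prod (κ := Fin n)
    (f := fun j ↦ Matrix.toLin' (A j)) (fun i j ↦ (hcomm i j).map Matrix.toLinAlgEquiv')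
    (fun j ↦ Module.End.iSup_maxGenEigenspace_eq_top _) (by simp)
  refine ⟨lam, fun v ↦ ?_⟩
  rw [← hlam v, ← LinearMap.det_toLin', map_sum]
  simp_rw [map_smul]
end

section
/- Let n be a natural number and Φ : Matrix (Fin n) (Fin n) ℂ. Then the characteristic polynomial of Φ satisfies Matrix.charpoly Φ = ∑_{m = 0}^{n} (−1)^m · (trace of the endomorphism of the m-th exterior power ⋀[ℂ]^m (Fin n → ℂ) induced by the linear map Matrix.toLin' Φ) · X^{n − m}, i.e. for every m ≤ n the coefficient of X^{n−m} in Matrix.charpoly Φ equals (−1)^m times the trace of the induced endomorphism of the m-th exterior power of ℂ^n. -/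
/-- The linear map induced on the `m`-th exterior power of `M` by a linear
endomorphism of `M`. -/
noncomputable def exteriorPowerMap {R M : Type*} [CommRing R] [AddCommGroup M]
    [Module R M] (m : ℕ) (f : M →ₗ[R] M) : ⋀[R]^m M →ₗ[R] ⋀[R]^m M :=
  (ExteriorAlgebra.map f).toLinearMap.restrict (p := ⋀[R]^m M) (q := ⋀[R]^m M)
    (fun x hx => by
      have h : Submodule.map (ExteriorAlgebra.map f).toLinearMap (⋀[R]^m M)
          ≤ ⋀[R]^m M := by
        rw [ExteriorAlgebra.exteriorPower, Submodule.map_pow]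
        refine pow_le_pow_left' ?_ m
        rw [ExteriorAlgebra.ι_range_map_map]
        exact LinearMap.map_le_range
      exact h ⟨x, hx, rfl⟩)

/-!
In the basis `e_S = e_{s₁} ∧ ⋯ ∧ e_{sₘ}` (`S = {s₁ < ⋯ < sₘ}`) of `⋀^m M` induced by a basis of `M`,
the diagonal entry of `⋀^m f` at `e_S` is the principal `S × S` minor of the matrix of `f`.
Hence the trace of `⋀^m f` is the sum of the principal `m × m` minors, which is, up to the sign
`(-1)^m`, the coefficient of `X^(n-m)` in the characteristic polynomial.
-/

open Module

namespace exteriorPower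

variable {R M I : Type*} [CommRing R] [AddCommGroup M] [Module R M] [LinearOrder I] [Fintype I]

lemma basis_repr_map_basis_self (n : ℕ) (b : Basis I R M) (f : M →ₗ[R] M)
    (s : Set.powersetCard I n) :
    (b.exteriorPower n).repr (map n f (b.exteriorPower n s)) s =
      ((LinearMap.toMatrix b b f).submatrix (s.val.orderEmbOfFin s.prop)
        (s.val.orderEmbOfFin s.prop)).det := by
  rw [basis_apply, map_apply_ιMulti_family, basis_repr_apply, ιMulti_family,
    ιMultiDual_apply_ιMulti, ← Matrix.det_transpose]
  congr 1
  ext i j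
  simp [LinearMap.toMatrix_apply, Set.powersetCard.ofFinEmbEquiv_symm_apply]

lemma trace_map_eq_sum_minors (n : ℕ) (b : Basis I R M) (f : M →ₗ[R] M) :
    LinearMap.trace R (⋀[R]^n M) (map n f) =
      ∑ s ∈ Finset.univ.powersetCard n,
        ((LinearMap.toMatrix b b f).submatrix (Subtype.val : s → I) Subtype.val).det := by
  have minor_eq (s : Set.powersetCard I n) :
      ((LinearMap.toMatrix b b f).submatrix (s.val.orderEmbOfFin s.prop)
        (s.val.orderEmbOfFin s.prop)).det =
      ((LinearMap.toMatrix b b f).submatrix (Subtype.val : s.val → I) Subtype.val).det := by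
    rw [← Matrix.det_submatrix_equiv_self (s.val.orderIsoOfFin s.prop).toEquiv,
      Matrix.submatrix_submatrix]
    rfl
  rw [LinearMap.trace_eq_matrix_trace R (b.exteriorPower n), Matrix.trace]
  simp only [Matrix.diag_apply, LinearMap.toMatrix_apply, basis_repr_map_basis_self, minor_eq]
  exact (Finset.sum_subtype _ (fun s => by simp [Set.powersetCard.mem_iff])
    (fun s : Finset I => ((LinearMap.toMatrix b b f).submatrix (Subtype.val : s → I)
      Subtype.val).det)).symm

end exteriorPower

lemma LinearMap.charpoly_coeff_eq_trace_exteriorPower_map {R M : Type*} [CommRing R]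
    [AddCommGroup M] [Module R M] [Module.Free R M] [Module.Finite R M] (f : M →ₗ[R] M) {m : ℕ}
    (hm : m ≤ finrank R M) :
    f.charpoly.coeff (finrank R M - m) =
      (-1) ^ m * LinearMap.trace R (⋀[R]^m M) (exteriorPower.map m f) := by
  nontriviality R
  let b := finBasis R M
  rw [← LinearMap.charpoly_toMatrix f b, exteriorPower.trace_map_eq_sum_minors m b]
  simpa only [Fintype.card_fin] using
    Matrix.charpoly_coeff_eq_sum_minors (LinearMap.toMatrix b b f) m (by rwa [Fintype.card_fin])

lemma exteriorPowerMap_eq_map {R M : Type*} [CommRing R] [AddCommGroup M] [Module R M] (m : ℕ)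
    (f : M →ₗ[R] M) : exteriorPowerMap m f = exteriorPower.map m f := by
  ext v
  simp [exteriorPowerMap, ExteriorAlgebra.map_apply_ιMulti, Function.comp_def]

theorem charpoly_coeff_eq_trace_exteriorPower
    (n : ℕ) (Φ : Matrix (Fin n) (Fin n) ℂ) :
    ∀ m : ℕ, m ≤ n →
      (Matrix.charpoly Φ).coeff (n - m)
        = (-1) ^ m *
          LinearMap.trace ℂ (⋀[ℂ]^m (Fin n → ℂ)) (exteriorPowerMap m (Matrix.toLin' Φ)) := by
  intro m hm
  have key := (Matrix.toLin' Φ).charpoly_coeff_eq_trace_exteriorPower_map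
    (m := m) (by rwa [finrank_fin_fun])
  rwa [Matrix.charpoly_toLin', finrank_fin_fun, ← exteriorPowerMap_eq_map] at key
end
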